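/- Let ‖·‖ and ‖·‖' be norms on ℝ², B the closed unit ball of ‖·‖, D = 2B \ int(B) the annulus, M = ∂B the unit sphere of ‖·‖. There exists a map h: ℝ² → B with h(x) = x for all x ∈ B and ‖h(x) − h(y)‖' ≤ ‖x − y‖' for all x, y (a contractive retraction onto B), and the restriction of h to D maps D onto M and is a 1-Lipschitz retraction of D onto M (w.r.t. the metric induced by ‖·‖'). -/

import Mathlib

/-!
The ball `B = {n ≤ 1}` is the intersection of countably many half-planes `g j ≤ 1` cut out by
supporting functionals `g j ≤ n`. In the plane every half-plane `g ≤ 1` is a nonexpansive retract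
for any seminorm `q`: push points back to the line `g = 1` along a direction `v` for which the
projection `w ↦ w - g w • v` onto `ker g` does not increase `q` (choose `v` in the kernel of a
Hahn–Banach functional normalising a generator of `ker g`). Composing these retractions, visiting
each half-plane infinitely often, gives sequences that are Fejér monotone with respect to `B`.
For strictly convex `q` they converge: two cluster points would be `q`-equidistant from every
point of the open set `{n < 1}`, which forces them to coincide. A general `n'` is the limit of
the strictly convex `n' + e / (m + 1)` (`e` Euclidean), and a pointwise ultrafilter limit of the
corresponding retractions is the required map `h`.
-/

open Set Filter Topology Module
open scoped NNReal

section Algebra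

variable {E : Type*} [AddCommGroup E] [Module ℝ E]

namespace Seminorm

def IsStrictlyConvex (p : Seminorm ℝ E) : Prop :=
  ∀ a b, p (a + b) = p a + p b → SameRay ℝ a b

theorem IsStrictlyConvex.smul {e : Seminorm ℝ E} (he : e.IsStrictlyConvex) {c : ℝ≥0}
    (hc : c ≠ 0) : (c • e).IsStrictlyConvex := fun a b h => by
  simp only [smul_apply, NNReal.smul_def, smul_eq_mul] at h
  exact he a b (mul_left_cancel₀ (by exact_mod_cast hc) (h.trans (mul_add _ _ _).symm))

theorem IsStrictlyConvex.add_left {e : Seminorm ℝ E} (he : e.IsStrictlyConvex)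
    (q : Seminorm ℝ E) : (q + e).IsStrictlyConvex := fun a b h => by
  simp only [add_apply] at h
  exact he a b (by linarith [map_add_le_add q a b, map_add_le_add e a b])

theorem exists_dual_eq_of_abs_le (p : Seminorm ℝ E) (x : E) :
    ∃ g : Dual ℝ E, g x = p x ∧ ∀ y, |g y| ≤ p y := by
  rcases eq_or_ne x 0 with rfl | hx
  · exact ⟨0, by simp, fun y => by simp⟩
  let f : E →ₗ.[ℝ] ℝ := LinearPMap.mkSpanSingleton x (p x) hx
  obtain ⟨g, hgf, hg⟩ := Module.Dual.exists_extension_of_le_seminorm_real f.domain f.toFun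
    (p := p) <| by
    rintro ⟨y, hy⟩
    obtain ⟨c, rfl⟩ := Submodule.mem_span_singleton.mp hy
    have : f ⟨c • x, hy⟩ = c * p x := LinearPMap.mkSpanSingleton'_apply x (p x) _ c hy
    rw [← LinearPMap.toFun_eq_coe] at this
    rw [this, Submodule.coe_mk, map_smul_eq_mul, Real.norm_eq_abs]
    exact mul_le_mul_of_nonneg_right (le_abs_self c) (apply_nonneg p x)
  refine ⟨g, ?_, hg⟩
  rw [hgf ⟨x, Submodule.mem_span_singleton_self x⟩]
  exact LinearPMap.mkSpanSingleton_apply ℝ ℝ hx (p x)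

end Seminorm

theorem mem_span_sub_of_sameRay {a b : E} (hab : SameRay ℝ a b) (hne : a ≠ b) :
    a ∈ ℝ ∙ (a - b) := by
  rcases eq_or_ne a 0 with rfl | ha
  · exact Submodule.zero_mem _
  obtain ⟨r, -, rfl⟩ := hab.exists_nonneg_left ha
  have hr : 1 - r ≠ 0 := fun h => hne (by rw [show r = 1 by linarith, one_smul])
  refine Submodule.mem_span_singleton.mpr ⟨(1 - r)⁻¹, ?_⟩
  rw [show a - r • a = (1 - r) • a by module, smul_smul, inv_mul_cancel₀ hr, one_smul]

theorem exists_mem_Icc_max_sub_max_eq_mul (a b : ℝ) :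
    ∃ l ∈ Icc (0 : ℝ) 1, max (a - 1) 0 - max (b - 1) 0 = l * (a - b) := by
  rcases eq_or_ne a b with rfl | hab
  · exact ⟨0, left_mem_Icc.mpr zero_le_one, by simp⟩
  have hab' : a - b ≠ 0 := sub_ne_zero.mpr hab
  refine ⟨(max (a - 1) 0 - max (b - 1) 0) / (a - b), ⟨?_, ?_⟩,
    (div_mul_cancel₀ _ hab').symm⟩
  · rw [div_nonneg_iff]
    rcases le_total a b with h | h
    · exact Or.inr ⟨by linarith [max_le_max_right 0 (sub_le_sub_right h 1)], by linarith⟩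
    · exact Or.inl ⟨by linarith [max_le_max_right 0 (sub_le_sub_right h 1)], by linarith⟩
  · refine (le_abs_self _).trans ?_
    rw [abs_div, div_le_one (abs_pos.mpr hab')]
    simpa using abs_max_sub_max_le_abs (a - 1) (b - 1) 0

def halfSpaceRetraction (f : Dual ℝ E) (v z : E) : E := z - max (f z - 1) 0 • v

theorem halfSpaceRetraction_of_le {f : Dual ℝ E} {v z : E} (hz : f z ≤ 1) :
    halfSpaceRetraction f v z = z := by
  simp [halfSpaceRetraction, hz]

theorem apply_halfSpaceRetraction {f : Dual ℝ E} {v : E} (hv : f v = 1) (z : E) :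
    f (halfSpaceRetraction f v z) = min (f z) 1 := by
  rw [halfSpaceRetraction, map_sub, map_smul, hv, smul_eq_mul, mul_one]
  rcases le_total (f z) 1 with h | h
  · simp [h]
  · simp [h]

theorem halfSpaceRetraction_sub_le (p : Seminorm ℝ E) {f : Dual ℝ E} {v : E}
    (hv : ∀ w, p (w - f w • v) ≤ p w) (z y : E) :
    p (halfSpaceRetraction f v z - halfSpaceRetraction f v y) ≤ p (z - y) := by
  obtain ⟨l, ⟨hl₀, hl₁⟩, hl⟩ := exists_mem_Icc_max_sub_max_eq_mul (f z) (f y)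
  have hsplit : halfSpaceRetraction f v z - halfSpaceRetraction f v y =
      (1 - l) • (z - y) + l • ((z - y) - f (z - y) • v) := by
    rw [halfSpaceRetraction, halfSpaceRetraction, map_sub]
    linear_combination (norm := module) (-hl) • v
  calc _ ≤ (1 - l) * p (z - y) + l * p ((z - y) - f (z - y) • v) := by
        rw [hsplit]
        refine (map_add_le_add p _ _).trans_eq ?_
        rw [map_smul_eq_mul, map_smul_eq_mul, Real.norm_of_nonneg hl₀,
          Real.norm_of_nonneg (by linarith)]
    _ ≤ (1 - l) * p (z - y) + l * p (z - y) := by gcongr; exact hv _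
    _ = p (z - y) := by ring

variable [FiniteDimensional ℝ E]

theorem exists_ker_eq_span_singleton (hE : finrank ℝ E = 2) {f : Dual ℝ E} (hf : f ≠ 0) :
    ∃ u : E, LinearMap.ker f = ℝ ∙ u := by
  have hker : finrank ℝ (LinearMap.ker f) = 1 := by
    have := Module.Dual.finrank_ker_add_one_of_ne_zero hf
    omega
  obtain ⟨u, -, hu⟩ := finrank_eq_one_iff'.mp hker
  refine ⟨u, le_antisymm (fun w hw => ?_) ((Submodule.span_singleton_le_iff_mem _ _).mpr u.2)⟩
  obtain ⟨c, hc⟩ := hu ⟨w, hw⟩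
  exact Submodule.mem_span_singleton.mpr ⟨c, by simpa using congrArg Subtype.val hc⟩

theorem exists_apply_eq_one_forall_sub_smul_le (hE : finrank ℝ E = 2) (p : Seminorm ℝ E)
    {f : Dual ℝ E} (hf : f ≠ 0) : ∃ v, f v = 1 ∧ ∀ w, p (w - f w • v) ≤ p w := by
  obtain ⟨u, hu⟩ := exists_ker_eq_span_singleton hE hf
  have hfu : f u = 0 := LinearMap.mem_ker.mp (hu ▸ Submodule.mem_span_singleton_self u)
  obtain ⟨v₀, hv₀⟩ : ∃ v₀, f v₀ = 1 := by
    obtain ⟨x, hx⟩ := DFunLike.ne_iff.mp hf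
    exact ⟨(f x)⁻¹ • x, by simp [inv_mul_cancel₀ hx]⟩
  obtain ⟨g, hgu, hg⟩ := p.exists_dual_eq_of_abs_le u
  set v := v₀ - (g v₀ / p u) • u
  refine ⟨v, by simp [v, hv₀, hfu], fun w => ?_⟩
  obtain ⟨c, hc⟩ : ∃ c : ℝ, c • u = w - f w • v :=
    Submodule.mem_span_singleton.mp (hu ▸ by simp [v, hv₀, hfu])
  rw [← hc, map_smul_eq_mul, Real.norm_eq_abs]
  rcases eq_or_ne (p u) 0 with hpu | hpu
  · simp [hpu]
  have hgv : g v = 0 := by simp [v, hgu, hpu]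
  have hcg : c * p u = g w := by
    rw [← hgu, ← smul_eq_mul, ← map_smul, hc, map_sub, map_smul, hgv, smul_zero, sub_zero]
  calc |c| * p u = |c * p u| := by rw [abs_mul, abs_of_nonneg (apply_nonneg p u)]
    _ ≤ p w := hcg ▸ hg w

theorem exists_halfSpace_retraction (hE : finrank ℝ E = 2) (p : Seminorm ℝ E) (f : Dual ℝ E) :
    ∃ r : E → E, (∀ z, f z ≤ 1 → r z = z) ∧ (∀ z, f (r z) = min (f z) 1) ∧
      ∀ z y, p (r z - r y) ≤ p (z - y) := by
  rcases eq_or_ne f 0 with rfl | hf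
  · exact ⟨id, fun _ _ => rfl, fun _ => by simp, fun _ _ => le_rfl⟩
  obtain ⟨v, hv, hpv⟩ := exists_apply_eq_one_forall_sub_smul_le hE p hf
  exact ⟨halfSpaceRetraction f v, fun _ => halfSpaceRetraction_of_le,
    apply_halfSpaceRetraction hv, halfSpaceRetraction_sub_le p hpv⟩

end Algebra

section Iterate

variable {α : Type*}

def iterateSeq (R : ℕ → α → α) (x : α) : ℕ → α
  | 0 => x
  | k + 1 => R k (iterateSeq R x k)

theorem iterateSeq_eq_self {R : ℕ → α → α} {x : α} (hx : ∀ k, R k x = x) (k : ℕ) :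
    iterateSeq R x k = x := by
  induction k with
  | zero => rfl
  | succ k ih => rw [iterateSeq, ih, hx]

variable [Sub α] {N : α → ℝ} {R : ℕ → α → α}

theorem iterateSeq_sub_le (hR : ∀ k z y, N (R k z - R k y) ≤ N (z - y)) (x y : α) (k : ℕ) :
    N (iterateSeq R x k - iterateSeq R y k) ≤ N (x - y) := by
  induction k with
  | zero => exact le_rfl
  | succ k ih => exact (hR k _ _).trans ih

theorem antitone_iterateSeq_sub (hR : ∀ k z y, N (R k z - R k y) ≤ N (z - y)) {b : α}
    (hb : ∀ k, R k b = b) (x : α) : Antitone fun k => N (iterateSeq R x k - b) :=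
  antitone_nat_of_succ_le fun k => by
    have := hR k (iterateSeq R x k) b
    rwa [hb] at this

end Iterate

theorem Nat.frequently_unpair_fst_eq (j : ℕ) : ∃ᶠ k in atTop, (Nat.unpair k).1 = j :=
  frequently_atTop.mpr fun K => ⟨Nat.pair j K, Nat.right_le_pair j K, by simp⟩

section Normed

variable {E : Type*} [NormedAddCommGroup E] [NormedSpace ℝ E]

theorem Seminorm.eq_iInf_of_mapClusterPt {N : Seminorm ℝ E} (hNc : Continuous N) {z : ℕ → E}
    {b : E} (hz : Antitone fun k => N (z k - b)) {y : E} (hy : MapClusterPt y atTop z) :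
    N (y - b) = ⨅ k, N (z k - b) := by
  have hlim := tendsto_atTop_ciInf hz ⟨0, by rintro _ ⟨k, rfl⟩; exact apply_nonneg N _⟩
  have hcl := hy.tendsto_comp ((hNc.comp (continuous_sub_right b)).tendsto y)
  exact eq_of_nhds_neBot (ClusterPt.mono hcl hlim)

theorem eq_of_forall_mem_seminorm_sub_eq (hE : 1 < finrank ℝ E) {N : Seminorm ℝ E}
    (hN : N.IsStrictlyConvex) {U : Set E} (hU : IsOpen U) (hUne : U.Nonempty) {y₁ y₂ : E}
    (h : ∀ b ∈ U, N (y₁ - b) = N (y₂ - b)) : y₁ = y₂ := by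
  by_contra hne
  have hline : ∀ p ∈ U, y₁ - p ∈ ℝ ∙ (y₁ - y₂) := by
    intro p hp
    have hq : ∀ᶠ t in 𝓝 (0 : ℝ), p + t • (p - y₁) ∈ U :=
      (Continuous.tendsto' (by fun_prop) 0 p (by simp)).eventually (hU.mem_nhds hp)
    obtain ⟨t, htU, ht⟩ := ((hq.filter_mono nhdsWithin_le_nhds).and
      (self_mem_nhdsWithin : Ioi (0 : ℝ) ∈ 𝓝[>] 0)).exists
    -- `y₂` is as far from `p + t • (p - y₁)` as `y₁`, which forces equality in a triangle
    -- inequality through `p`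
    have hray : SameRay ℝ (t • (y₁ - p)) (y₂ - p) := by
      refine hN _ _ ?_
      calc N (t • (y₁ - p) + (y₂ - p))
          = N (y₂ - (p + t • (p - y₁))) := by congr 1; module
        _ = N (y₁ - (p + t • (p - y₁))) := (h _ htU).symm
        _ = N ((1 + t) • (y₁ - p)) := by congr 1; module
        _ = N (t • (y₁ - p)) + N (y₂ - p) := by
          rw [map_smul_eq_mul, map_smul_eq_mul, ← h p hp, Real.norm_of_nonneg ht.le,
            Real.norm_of_nonneg (by linarith [ht.le] : (0 : ℝ) ≤ 1 + t)]
          ring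
    have hray' : SameRay ℝ (y₁ - p) (y₂ - p) := by
      simpa [smul_smul, inv_mul_cancel₀ ht.ne'] using hray.pos_smul_left (inv_pos.mpr ht)
    simpa using mem_span_sub_of_sameRay hray' (by simpa using hne)
  have htop : ℝ ∙ (y₁ - y₂) = ⊤ := by
    refine Submodule.eq_top_of_nonempty_interior' _ ?_
    obtain ⟨p, hp⟩ := hUne
    refine ⟨y₁ - p, interior_maximal (t := (fun w => y₁ - w) ⁻¹' U) (fun w hw => ?_)
      (hU.preimage (by fun_prop)) (by simpa using hp)⟩
    simpa using hline _ hw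
  have := finrank_span_singleton (K := ℝ) (sub_ne_zero.mpr hne)
  rw [htop, finrank_top] at this
  omega

variable [FiniteDimensional ℝ E]

namespace Seminorm

theorem continuous_of_finiteDimensional (p : Seminorm ℝ E) : Continuous p := by
  rw [← continuousOn_univ]
  simpa using p.convexOn.continuousOn_interior

theorem exists_pos_mul_norm_le {p : Seminorm ℝ E} (hp : ∀ x, x ≠ 0 → 0 < p x) :
    ∃ c > 0, ∀ z, c * ‖z‖ ≤ p z := by
  cases subsingleton_or_nontrivial E with
  | inl _ => exact ⟨1, one_pos, fun z => by simp [Subsingleton.elim z 0]⟩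
  | inr _ =>
    obtain ⟨z₀, hz₀, hmin⟩ := (isCompact_sphere (0 : E) 1).exists_isMinOn
      (NormedSpace.sphere_nonempty.mpr zero_le_one) p.continuous_of_finiteDimensional.continuousOn
    have hz₀1 : ‖z₀‖ = 1 := by simpa using hz₀
    refine ⟨p z₀, hp z₀ (norm_ne_zero_iff.mp (by simp [hz₀1])), fun z => ?_⟩
    rcases eq_or_ne z 0 with rfl | hz
    · simp
    have hz' : 0 < ‖z‖ := norm_pos_iff.mpr hz
    have := hmin (show ‖z‖⁻¹ • z ∈ Metric.sphere (0 : E) 1 by simp [norm_smul, hz'.ne'])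
    rw [Set.mem_ofPred_eq, map_smul_eq_mul, norm_inv, norm_norm] at this
    calc p z₀ * ‖z‖ ≤ ‖z‖⁻¹ * p z * ‖z‖ := by gcongr
      _ = p z := by field_simp

theorem isCompact_closedBall_zero {p : Seminorm ℝ E} (hp : ∀ x, x ≠ 0 → 0 < p x) (r : ℝ) :
    IsCompact (p.closedBall 0 r) := by
  obtain ⟨c, hc, hle⟩ := exists_pos_mul_norm_le hp
  refine (isCompact_closedBall (0 : E) (r / c)).of_isClosed_subset ?_ fun z hz => ?_
  · simpa [Seminorm.closedBall_zero_eq] using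
      isClosed_le p.continuous_of_finiteDimensional continuous_const
  · rw [Seminorm.mem_closedBall_zero] at hz
    rw [mem_closedBall_zero_iff, le_div_iff₀ hc, mul_comm]
    exact (hle z).trans hz

theorem exists_seq_dual_le_and_le_one_of_forall_le_one (n : Seminorm ℝ E) :
    ∃ g : ℕ → Dual ℝ E, (∀ j z, g j z ≤ n z) ∧
      ∀ z, (∀ j, g j z ≤ 1) → n z ≤ 1 := by
  obtain ⟨u, hu⟩ := TopologicalSpace.exists_dense_seq E
  choose g hgu hg using fun j => n.exists_dual_eq_of_abs_le (u j)
  refine ⟨g, fun j z => (le_abs_self _).trans (hg j z), fun z hz => ?_⟩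
  by_contra! hnz
  have hopen : IsOpen {y | n (y - z) < (n z - 1) / 2} :=
    isOpen_lt (n.continuous_of_finiteDimensional.comp (continuous_sub_right z)) continuous_const
  obtain ⟨j, hj⟩ := hu.exists_mem_open hopen ⟨z, by simpa using hnz⟩
  have hgj : g j (u j - z) ≤ n (u j - z) := (le_abs_self _).trans (hg j _)
  have htri : n z ≤ n (u j) + n (u j - z) := by
    simpa [map_sub_rev] using map_add_le_add n (u j) (z - u j)
  rw [map_sub, hgu] at hgj
  linarith [hz j, show n (u j - z) < (n z - 1) / 2 from hj]

end Seminorm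

theorem exists_isStrictlyConvex_seminorm :
    ∃ e : Seminorm ℝ E, e.IsStrictlyConvex := by
  let φ := LinearEquiv.ofFinrankEq E (EuclideanSpace ℝ (Fin (finrank ℝ E)))
    finrank_euclideanSpace_fin.symm
  refine ⟨(normSeminorm ℝ _).comp φ.toLinearMap, fun a b h => ?_⟩
  have hray : SameRay ℝ (φ a) (φ b) := sameRay_iff_norm_add.mpr (by simpa using h)
  simpa using hray.map φ.symm.toLinearMap

theorem exists_tendsto_of_antitone_seminorm_sub (hE : 1 < finrank ℝ E) {N : Seminorm ℝ E}
    (hN : N.IsStrictlyConvex) {U : Set E} (hU : IsOpen U) (hUne : U.Nonempty) {K : Set E}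
    (hK : IsCompact K) {z : ℕ → E} (hzK : ∀ k, z k ∈ K)
    (hz : ∀ b ∈ U, Antitone fun k => N (z k - b)) : ∃ y, Tendsto z atTop (𝓝 y) := by
  have hKz : ∀ᶠ k in atTop, z k ∈ K := Eventually.of_forall hzK
  obtain ⟨y, -, hy⟩ := hK.exists_mapClusterPt (le_principal_iff.mpr hKz)
  refine ⟨y, hK.tendsto_nhds_of_unique_mapClusterPt hKz fun y' _ hy' => ?_⟩
  have hNc := N.continuous_of_finiteDimensional
  refine eq_of_forall_mem_seminorm_sub_eq hE hN hU hUne fun b hb => ?_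
  rw [N.eq_iInf_of_mapClusterPt hNc (hz b hb) hy, N.eq_iInf_of_mapClusterPt hNc (hz b hb) hy']

theorem exists_tendsto_iterateSeq (hE : 1 < finrank ℝ E) {N : Seminorm ℝ E}
    (hNpos : ∀ x, x ≠ 0 → 0 < N x) (hN : N.IsStrictlyConvex) {R : ℕ → E → E}
    (hR : ∀ k z y, N (R k z - R k y) ≤ N (z - y)) {U : Set E} (hU : IsOpen U) (hU₀ : 0 ∈ U)
    (hfix : ∀ b ∈ U, ∀ k, R k b = b) (x : E) :
    ∃ y, Tendsto (iterateSeq R x) atTop (𝓝 y) := by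
  refine exists_tendsto_of_antitone_seminorm_sub hE hN hU ⟨0, hU₀⟩
    (N.isCompact_closedBall_zero hNpos (N x)) (fun k => ?_)
    fun b hb => antitone_iterateSeq_sub hR (hfix b hb) x
  have := antitone_iterateSeq_sub hR (hfix 0 hU₀) x (Nat.zero_le k)
  simp only [sub_zero] at this
  exact N.mem_closedBall_zero.mpr this

theorem exists_nonexpansive_retraction_of_isStrictlyConvex (hE : finrank ℝ E = 2) (n : Seminorm ℝ E)
    {N : Seminorm ℝ E} (hNpos : ∀ x, x ≠ 0 → 0 < N x) (hN : N.IsStrictlyConvex) :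
    ∃ h : E → E, (∀ x, n x ≤ 1 → h x = x) ∧ (∀ x, n (h x) ≤ 1) ∧
      (∀ x y, N (h x - h y) ≤ N (x - y)) ∧ ∀ x, 1 ≤ n x → 1 ≤ n (h x) := by
  obtain ⟨g, hgn, hgB⟩ := n.exists_seq_dual_le_and_le_one_of_forall_le_one
  -- every half-plane `g j ≤ 1` is visited infinitely often
  let σ k := (Nat.unpair k).1
  choose R hRfix hRapply hR using fun k => exists_halfSpace_retraction hE N (g (σ k))
  have hfixB : ∀ b, n b ≤ 1 → ∀ k, R k b = b := fun b hb k => hRfix k b ((hgn _ b).trans hb)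
  have hn := n.continuous_of_finiteDimensional
  choose L hL using exists_tendsto_iterateSeq (by omega) hNpos hN hR (isOpen_lt hn continuous_const)
    (by simp) fun b hb => hfixB b (le_of_lt hb)
  refine ⟨L, fun x hx => ?_, fun x => hgB _ fun j => ?_, fun x y => ?_, fun x hx => ?_⟩
  · have hconst := hL x
    rw [funext (iterateSeq_eq_self (hfixB x hx))] at hconst
    exact tendsto_nhds_unique hconst tendsto_const_nhds
  · have hsucc : Tendsto (fun k => iterateSeq R x (k + 1)) atTop (𝓝 (L x)) :=
      (hL x).comp (tendsto_add_atTop_nat 1)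
    refine (isClosed_le (g j).continuous_of_finiteDimensional
      continuous_const).mem_of_frequently_of_tendsto ?_ hsucc
    refine (Nat.frequently_unpair_fst_eq j).mono fun k hk => ?_
    show g j (R k _) ≤ 1
    rw [← hk, hRapply]
    exact min_le_right _ _
  · exact le_of_tendsto ((N.continuous_of_finiteDimensional.tendsto _).comp ((hL x).sub (hL y)))
      (Eventually.of_forall (iterateSeq_sub_le hR x y))
  · refine ge_of_tendsto ((hn.tendsto _).comp (hL x)) (Eventually.of_forall fun k => ?_)
    induction k with
    | zero => exact hx
    | succ k ih =>
      show 1 ≤ n (R k _)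
      rcases le_total (g (σ k) (iterateSeq R x k)) 1 with h | h
      · rwa [hRfix k _ h]
      · have := hgn (σ k) (R k (iterateSeq R x k))
        rw [hRapply, min_eq_right h] at this
        exact this

theorem exists_nonexpansive_retraction_closedBall (hE : finrank ℝ E = 2) (n q : Seminorm ℝ E)
    (hq : ∀ x, x ≠ 0 → 0 < q x) :
    ∃ h : E → E, (∀ x, n x ≤ 1 → h x = x) ∧ (∀ x, n (h x) ≤ 1) ∧
      (∀ x y, q (h x - h y) ≤ q (x - y)) ∧ ∀ x, 1 ≤ n x → 1 ≤ n (h x) := by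
  obtain ⟨e, he⟩ := exists_isStrictlyConvex_seminorm (E := E)
  let ε : ℕ → ℝ≥0 := fun m => (m + 1 : ℝ≥0)⁻¹
  have hεm : ∀ m, (ε m : ℝ) = 1 / ((m : ℝ) + 1) := fun m => by simp [ε]
  have hε : Tendsto (fun m => (ε m : ℝ)) atTop (𝓝 0) := by
    simpa only [hεm] using tendsto_one_div_add_atTop_nhds_zero_nat
  choose h hfix hball hlip hout using fun m => exists_nonexpansive_retraction_of_isStrictlyConvex hE n
    (N := q + ε m • e) (fun x hx => (hq x hx).trans_le (le_add_of_nonneg_right (by positivity)))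
    ((he.smul (by simp [ε])).add_left q)
  have hlip' : ∀ m x y, q (h m x - h m y) ≤ q (x - y) + ε m * e (x - y) := fun m x y =>
    (le_add_of_nonneg_right (by positivity)).trans (hlip m x y)
  let 𝒰 := Ultrafilter.of (atTop : Filter ℕ)
  have hbound : ∀ x m, h m x ∈ q.closedBall 0 (q x + e x) := fun x m => by
    have := hlip' m x 0
    have hε1 : (ε m : ℝ) ≤ 1 := by simp [ε, inv_le_one_of_one_le₀]
    rw [hfix m 0 (by simp), sub_zero, sub_zero] at this
    rw [q.mem_closedBall_zero]
    nlinarith [apply_nonneg e x]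
  choose H hH using fun x => ((q.isCompact_closedBall_zero hq (q x + e x)).ultrafilter_le_nhds
    (𝒰.map (h · x)) (by
      rw [Ultrafilter.coe_map, le_principal_iff, mem_map]
      exact univ_mem' (hbound x))).imp fun _ => And.right
  replace hH : ∀ x, Tendsto (h · x) 𝒰 (𝓝 (H x)) := hH
  have hn := n.continuous_of_finiteDimensional
  refine ⟨H, fun x hx => ?_, fun x => ?_, fun x y => ?_, fun x hx => ?_⟩
  · exact tendsto_nhds_unique (hH x) (by simp [hfix _ x hx])
  · exact le_of_tendsto ((hn.tendsto _).comp (hH x)) (Eventually.of_forall (hball · x))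
  · have hrhs : Tendsto (fun m => q (x - y) + ε m * e (x - y)) 𝒰 (𝓝 (q (x - y))) := by
      simpa using (tendsto_const_nhds.add (hε.mul_const (e (x - y)))).mono_left
        (Ultrafilter.of_le _)
    exact le_of_tendsto_of_tendsto ((q.continuous_of_finiteDimensional.tendsto _).comp
      ((hH x).sub (hH y))) hrhs (Eventually.of_forall (hlip' · x y))
  · exact ge_of_tendsto ((hn.tendsto _).comp (hH x)) (Eventually.of_forall (hout · x hx))

end Normed

theorem stmt15_general (n n' : (Fin 2 → ℝ) → ℝ)
    (hn_add : ∀ x y, n (x + y) ≤ n x + n y)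
    (hn_smul : ∀ (c : ℝ) x, n (c • x) = |c| * n x)
    (hn'_add : ∀ x y, n' (x + y) ≤ n' x + n' y)
    (hn'_smul : ∀ (c : ℝ) x, n' (c • x) = |c| * n' x)
    (hn'_pos : ∀ x, x ≠ 0 → 0 < n' x) :
    ∃ h : (Fin 2 → ℝ) → (Fin 2 → ℝ),
      (∀ x, n x ≤ 1 → h x = x) ∧
      (∀ x, n (h x) ≤ 1) ∧
      (∀ x y, n' (h x - h y) ≤ n' (x - y)) ∧
      (∀ x, 1 ≤ n x → n x ≤ 2 → n (h x) = 1) ∧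
      (∀ y, n y = 1 → ∃ x, 1 ≤ n x ∧ n x ≤ 2 ∧ h x = y) := by
  obtain ⟨h, hfix, hball, hlip, hout⟩ := exists_nonexpansive_retraction_closedBall (finrank_fin_fun ℝ)
    (Seminorm.of n hn_add hn_smul) (Seminorm.of n' hn'_add hn'_smul) hn'_pos
  exact ⟨h, hfix, hball, hlip, fun x hx _ => (hball x).antisymm (hout x hx),
    fun y hy => ⟨y, hy.ge, by linarith, hfix y hy.le⟩⟩

theorem stmt15 (n n' : (Fin 2 → ℝ) → ℝ)
    (hn_add : ∀ x y, n (x + y) ≤ n x + n y)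
    (hn_smul : ∀ (c : ℝ) x, n (c • x) = |c| * n x)
    (hn_pos : ∀ x, x ≠ 0 → 0 < n x)
    (hn'_add : ∀ x y, n' (x + y) ≤ n' x + n' y)
    (hn'_smul : ∀ (c : ℝ) x, n' (c • x) = |c| * n' x)
    (hn'_pos : ∀ x, x ≠ 0 → 0 < n' x) :
    ∃ h : (Fin 2 → ℝ) → (Fin 2 → ℝ),
      (∀ x, n x ≤ 1 → h x = x) ∧
      (∀ x, n (h x) ≤ 1) ∧
      (∀ x y, n' (h x - h y) ≤ n' (x - y)) ∧
      (∀ x, 1 ≤ n x → n x ≤ 2 → n (h x) = 1) ∧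
      (∀ y, n y = 1 → ∃ x, 1 ≤ n x ∧ n x ≤ 2 ∧ h x = y) :=
  stmt15_general n n' hn_add hn_smul hn'_add hn'_smul hn'_pos
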